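/- arXiv:1212.4298 — 2 statements merged into one kernel-verified Lean document; each statement's English description precedes it below -/
import Mathlib

section
/- Let G be a finite simple graph that is 3K₁-free and K₄-free. Then the chromatic number of G satisfies χ(G) ≤ 4. -/
/-!
The non-neighbours of a vertex form a clique, so there are at most 3 of them, and its neighbours
span a graph with neither a triangle nor an independent triple, so there are at most 5 of them
(`R(3, 3) = 6`). Hence `G` has at most 9 vertices, and 9 is impossible because the complement
would then be a cubic graph on an odd number of vertices.

Now take a coloring with `χ(G)` colors. Every color is used and every color class has at most
2 vertices. Minimality forces a vertex that is alone in its class to have neighbours of every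
other color, so lone vertices are pairwise adjacent, and every two-vertex class contains a vertex
adjacent to all lone vertices. If `χ(G) ≥ 5`, having at most 8 vertices forces two lone vertices
`x`, `y`. A third lone vertex together with any further class gives a `K₄`; otherwise three
two-vertex classes give three common neighbours of `x` and `y`, two of which are adjacent.
-/

open Finset

namespace SimpleGraph

variable {V : Type*} {G : SimpleGraph V}

lemma IsClique.card_lt_of_cliqueFreeOn {n : ℕ} {s : Set V} {t : Finset V}
    (ht : G.IsClique (t : Set V)) (hts : (t : Set V) ⊆ s) (h : G.CliqueFreeOn s n) : #t < n := by
  by_contra! hn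
  obtain ⟨u, hut, huc⟩ := exists_subset_card_eq hn
  exact h ((coe_subset.2 hut).trans hts) ⟨ht.subset (coe_subset.2 hut), huc⟩

lemma is4Clique_of_adj [DecidableEq V] {w x y z : V} (hxy : G.Adj x y) (hxz : G.Adj x z)
    (hyz : G.Adj y z) (hwx : G.Adj w x) (hwy : G.Adj w y) (hwz : G.Adj w z) :
    G.IsNClique 4 {w, x, y, z} :=
  (is3Clique_triple_iff.2 ⟨hxy, hxz, hyz⟩).insert (by simp [hwx, hwy, hwz])

lemma card_le_two_of_forall_adj {H : SimpleGraph V} {s t : Finset V} {v : V} (hv : v ∈ s)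
    (hts : t ⊆ s) (ht : ∀ w ∈ t, H.Adj v w) (h : H.CliqueFreeOn s 3)
    (hc : Hᶜ.CliqueFreeOn s 3) : #t ≤ 2 := by
  have hnadj := (cliqueFreeOn_two H).1 (h.of_succ _ hv)
  have hmem (w : V) (hw : w ∈ t) : w ∈ (s : Set V) ∩ H.neighborSet v := ⟨hts hw, ht w hw⟩
  have hclique : Hᶜ.IsClique (t : Set V) := fun a ha b hb hab ↦
    (compl_adj H a b).2 ⟨hab, hnadj (hmem a ha) (hmem b hb) hab⟩
  exact Nat.le_of_lt_succ (hclique.card_lt_of_cliqueFreeOn (coe_subset.2 hts) hc)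

lemma card_le_five_of_cliqueFreeOn {s : Finset V} (h : G.CliqueFreeOn s 3)
    (hc : Gᶜ.CliqueFreeOn s 3) : #s ≤ 5 := by
  classical
  obtain rfl | ⟨v, hv⟩ := s.eq_empty_or_nonempty
  · simp
  have hadj := card_le_two_of_forall_adj hv (t := {w ∈ s | G.Adj v w}) (filter_subset _ s)
    (by simp) h hc
  have hnadj := card_le_two_of_forall_adj hv (t := {w ∈ s | Gᶜ.Adj v w}) (filter_subset _ s)
    (by simp) hc (by rwa [compl_compl])
  calc #s ≤ #(insert v ({w ∈ s | G.Adj v w} ∪ {w ∈ s | Gᶜ.Adj v w})) := by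
        refine card_le_card fun w hw ↦ ?_
        by_cases hvw : v = w <;> simp [compl_adj, hw, hvw, em]
    _ ≤ #({w ∈ s | G.Adj v w} ∪ {w ∈ s | Gᶜ.Adj v w}) + 1 := card_insert_le _ _
    _ ≤ 5 := by grw [card_union_le]; omega

section Finite

variable [Fintype V]

lemma degree_le_five [DecidableRel G.Adj] (h3 : Gᶜ.CliqueFree 3) (h4 : G.CliqueFree 4) (v : V) :
    G.degree v ≤ 5 := by
  refine card_le_five_of_cliqueFreeOn ?_ h3.cliqueFreeOn
  simpa using (h4.cliqueFreeOn (s := Set.univ)).of_succ _ (Set.mem_univ v)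

lemma degree_compl_le_three [DecidableEq V] [DecidableRel G.Adj] (h3 : Gᶜ.CliqueFree 3)
    (h4 : G.CliqueFree 4) (v : V) : Gᶜ.degree v ≤ 3 := by
  have hclique : G.IsClique (Gᶜ.neighborSet v) :=
    (isIndepSet_compl G).1 (isIndepSet_neighborSet_of_triangleFree _ h3 v)
  refine Nat.le_of_lt_succ (IsClique.card_lt_of_cliqueFreeOn ?_ (Set.subset_univ _)
    (h4.cliqueFreeOn (s := Set.univ)))
  simpa using hclique

lemma card_le_eight (h3 : Gᶜ.CliqueFree 3) (h4 : G.CliqueFree 4) : Fintype.card V ≤ 8 := by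
  classical
  have hdeg (v : V) : Fintype.card V - 1 - G.degree v ≤ 3 := by
    simpa [degree_compl] using degree_compl_le_three h3 h4 v
  by_contra! h9
  obtain ⟨v⟩ : Nonempty V := Fintype.card_pos_iff.1 (by omega)
  have hcard : Fintype.card V = 9 := by have := hdeg v; have := degree_le_five h3 h4 v; omega
  have hcubic (v : V) : Gᶜ.degree v = 3 := by
    have := hdeg v; have := degree_le_five h3 h4 v; rw [degree_compl]; omega
  have := Gᶜ.sum_degrees_eq_twice_card_edges
  simp only [hcubic, sum_const, card_univ, hcard, smul_eq_mul] at this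
  omega

end Finite

namespace Coloring

variable {α : Type*}

def IsAlone (c : G.Coloring α) (x : V) : Prop := ∀ v, c v = c x → v = x

def update [DecidableEq V] (c : G.Coloring α) (x : V) (i : α)
    (h : ∀ v, G.Adj x v → c v ≠ i) : G.Coloring α :=
  Coloring.mk (Function.update c x i) fun {u w} huw ↦ by
    simp only [Function.update_apply]
    split_ifs with hu hw hw
    · exact absurd (hw ▸ hu ▸ huw) G.irrefl
    · exact (h w (hu ▸ huw)).symm
    · exact h u (hw ▸ huw.symm)
    · exact c.valid huw

@[simp]
lemma coe_update [DecidableEq V] (c : G.Coloring α) (x : V) (i : α)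
    (h : ∀ v, G.Adj x v → c v ≠ i) : ⇑(c.update x i h) = Function.update c x i :=
  rfl

variable {c : G.Coloring α}

lemma eq_or_eq_of_color_eq (h3 : Gᶜ.CliqueFree 3) {a b v : V} (hab : a ≠ b) (hc : c a = c b)
    (hv : c v = c a) : v = a ∨ v = b := by
  classical
  by_contra! hne
  refine h3 {a, b, v} (is3Clique_triple_iff.2 ⟨?_, ?_, ?_⟩) <;> rw [compl_adj]
  · exact ⟨hab, fun h ↦ c.valid h hc⟩
  · exact ⟨hne.1.symm, fun h ↦ c.valid h hv.symm⟩
  · exact ⟨hne.2.symm, fun h ↦ c.valid h (hv.trans hc).symm⟩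

variable [Fintype α]

lemma exists_adj_of_isAlone (hχ : Fintype.card α ≤ G.chromaticNumber) {x : V} {i : α}
    (hx : c.IsAlone x) (hi : i ≠ c x) : ∃ v, G.Adj x v ∧ c v = i := by
  classical
  by_contra! h
  obtain ⟨v, hv⟩ := card_le_chromaticNumber_iff_forall_surjective.1 hχ (c.update x i h) (c x)
  rcases eq_or_ne v x with rfl | hvx
  · exact hi (by simpa using hv)
  · exact hvx (hx v (by simpa [hvx] using hv))

lemma IsAlone.adj (hχ : Fintype.card α ≤ G.chromaticNumber) {x y : V} (hx : c.IsAlone x)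
    (hy : c.IsAlone y) (hxy : x ≠ y) : G.Adj x y := by
  obtain ⟨v, hxv, hv⟩ := exists_adj_of_isAlone hχ hx fun h ↦ hxy (hx y h).symm
  rwa [hy v hv] at hxv

/-- Otherwise `a` could move to the class of `x`, and then `b` to the class of `y`. -/
lemma adj_or_adj_of_isAlone (hχ : Fintype.card α ≤ G.chromaticNumber) (h3 : Gᶜ.CliqueFree 3)
    {a b x y : V} (hx : c.IsAlone x) (hy : c.IsAlone y) (hab : a ≠ b) (hc : c a = c b) :
    G.Adj a x ∨ G.Adj b y := by
  classical
  by_contra! ⟨hax, hby⟩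
  have hcx : c a ≠ c x := fun h ↦ hab ((hx a h).trans (hx b (hc ▸ h)).symm)
  have hcy : c b ≠ c y := fun h ↦ hab ((hy a (hc.trans h)).trans (hy b h).symm)
  rcases eq_or_ne x y with rfl | hxy
  · refine h3 {a, b, x} (is3Clique_triple_iff.2 ⟨?_, ?_, ?_⟩) <;> rw [compl_adj]
    · exact ⟨hab, fun h ↦ c.valid h hc⟩
    · exact ⟨fun h ↦ hcx (h ▸ rfl), hax⟩
    · exact ⟨fun h ↦ hcy (h ▸ rfl), hby⟩
  let c' := c.update a (c x) fun v hav hv ↦ hax (hx v hv ▸ hav)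
  have hc'a : c' a = c x := by simp [c']
  have hc'v (v : V) (hva : v ≠ a) : c' v = c v := by simp [c', hva]
  have hb : c'.IsAlone b := by
    intro v hv
    rw [hc'v b hab.symm] at hv
    rcases eq_or_ne v a with rfl | hva
    · exact absurd (hc.trans (hc'a ▸ hv).symm) hcx
    · rw [hc'v v hva] at hv
      exact (eq_or_eq_of_color_eq h3 hab hc (hv.trans hc.symm)).resolve_left hva
  obtain ⟨v, hbv, hv⟩ := exists_adj_of_isAlone hχ hb (i := c y) (hc'v b hab.symm ▸ hcy.symm)
  rcases eq_or_ne v a with rfl | hva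
  · exact hxy (hy x (hc'a ▸ hv))
  · exact hby (hy v (hc'v v hva ▸ hv) ▸ hbv)

lemma exists_forall_adj_of_isAlone (hχ : Fintype.card α ≤ G.chromaticNumber)
    (h3 : Gᶜ.CliqueFree 3) {T : Set V} (hT : ∀ t ∈ T, c.IsAlone t) (i : α) :
    ∃ e, c e = i ∧ (c.IsAlone e ∨ ∀ t ∈ T, G.Adj e t) := by
  obtain ⟨a, rfl⟩ := card_le_chromaticNumber_iff_forall_surjective.1 hχ c i
  by_cases ha : c.IsAlone a
  · exact ⟨a, rfl, .inl ha⟩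
  obtain ⟨b, hb, hba⟩ : ∃ b, c b = c a ∧ b ≠ a := by simpa [IsAlone] using ha
  by_contra! h
  obtain ⟨t, ht, hat⟩ := (h a rfl).2
  obtain ⟨t', ht', hbt'⟩ := (h b hb).2
  exact (adj_or_adj_of_isAlone hχ h3 (hT t ht) (hT t' ht') hba.symm hb.symm).elim hat hbt'

lemma exists_isAlone_ne [Fintype V] (c : G.Coloring α)
    (hχ : Fintype.card α ≤ G.chromaticNumber) (hV : Fintype.card V + 1 < 2 * Fintype.card α) :
    ∃ x y, x ≠ y ∧ c.IsAlone x ∧ c.IsAlone y := by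
  classical
  let S : Finset α := {i | #{v | c v = i} = 1}
  have hsum : Fintype.card V = ∑ i, #{v | c v = i} := card_eq_sum_card_fiberwise (by simp)
  have hS : 2 * Fintype.card α ≤ Fintype.card V + #S := by
    calc 2 * Fintype.card α = ∑ _i : α, 2 := by simp [mul_comm]
      _ ≤ ∑ i, (#{v | c v = i} + if #{v | c v = i} = 1 then 1 else 0) := by
        refine sum_le_sum fun i _ ↦ ?_
        obtain ⟨v, hv⟩ := card_le_chromaticNumber_iff_forall_surjective.1 hχ c i
        have : 0 < #{v | c v = i} := card_pos.2 ⟨v, by simp [hv]⟩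
        split_ifs <;> omega
      _ = Fintype.card V + #S := by rw [sum_add_distrib, ← hsum, card_filter]
  have alone : ∀ i ∈ S, ∃ x, c x = i ∧ c.IsAlone x := by
    intro i hi
    obtain ⟨x, hx⟩ := card_eq_one.1 (mem_filter.1 hi).2
    have hmem (v : V) : c v = i ↔ v = x := by simpa using congrArg (v ∈ ·) hx
    exact ⟨x, (hmem x).2 rfl, fun v hv ↦ (hmem v).1 (hv.trans ((hmem x).2 rfl))⟩
  obtain ⟨i, hi, j, hj, hij⟩ := one_lt_card.1 (by omega : 1 < #S)
  obtain ⟨x, rfl, hx⟩ := alone i hi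
  obtain ⟨y, rfl, hy⟩ := alone j hj
  exact ⟨x, y, fun h ↦ hij (h ▸ rfl), hx, hy⟩

lemma card_le_three_of_isAlone (hχ : Fintype.card α ≤ G.chromaticNumber)
    (h3 : Gᶜ.CliqueFree 3) (h4 : G.CliqueFree 4) {x y z : V} (hx : c.IsAlone x)
    (hy : c.IsAlone y) (hz : c.IsAlone z) (hxy : x ≠ y) (hxz : x ≠ z) (hyz : y ≠ z) :
    Fintype.card α ≤ 3 := by
  classical
  by_contra! h4α
  obtain ⟨i, -, hi⟩ := exists_mem_notMem_of_card_lt_card (s := {c x, c y, c z}) (t := univ)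
    (card_le_three.trans_lt (by simpa using h4α))
  have hT : ∀ t ∈ ({x, y, z} : Set V), c.IsAlone t := by simp [hx, hy, hz]
  obtain ⟨w, rfl, hw⟩ := exists_forall_adj_of_isAlone hχ h3 hT i
  have hwT : ∀ t ∈ ({x, y, z} : Set V), G.Adj w t := by
    refine hw.elim (fun hw t ht ↦ hw.adj hχ (hT t ht) ?_) id
    rintro rfl
    rcases ht with rfl | rfl | rfl <;> simp at hi
  exact h4 _ (is4Clique_of_adj (hx.adj hχ hy hxy) (hx.adj hχ hz hxz) (hy.adj hχ hz hyz)
    (hwT x (by simp)) (hwT y (by simp)) (hwT z (by simp)))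

lemma exists_isAlone_ne_ne (hχ : Fintype.card α ≤ G.chromaticNumber) (h3 : Gᶜ.CliqueFree 3)
    (h4 : G.CliqueFree 4) (h5 : 4 < Fintype.card α) {x y : V} (hx : c.IsAlone x)
    (hy : c.IsAlone y) (hxy : x ≠ y) : ∃ z, c.IsAlone z ∧ z ≠ x ∧ z ≠ y := by
  classical
  by_contra! hz
  have hend (i : α) (hi : i ≠ c x ∧ i ≠ c y) :
      ∃ e, c e = i ∧ G.Adj e x ∧ G.Adj e y := by
    obtain ⟨e, rfl, he⟩ := exists_forall_adj_of_isAlone hχ h3 (c := c) (T := {x, y})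
      (by simp [hx, hy]) i
    rcases he with he | he
    · exact absurd (hz e he (fun h ↦ hi.1 (h ▸ rfl))) (fun h ↦ hi.2 (h ▸ rfl))
    · exact ⟨e, rfl, he x (by simp), he y (by simp)⟩
  obtain ⟨s, hs, hs3⟩ := exists_subset_card_eq (s := univ \ {c x, c y}) (n := 3) (by
    grw [← le_card_sdiff, card_le_two]; simpa using by omega)
  obtain ⟨i, j, k, hij, hik, hjk, rfl⟩ := card_eq_three.1 hs3
  simp only [insert_subset_iff, singleton_subset_iff, mem_sdiff, mem_univ, mem_insert,
    mem_singleton, true_and] at hs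
  obtain ⟨e₁, rfl, h₁x, h₁y⟩ := hend i (by tauto)
  obtain ⟨e₂, rfl, h₂x, h₂y⟩ := hend j (by tauto)
  obtain ⟨e₃, rfl, h₃x, h₃y⟩ := hend k (by tauto)
  have hnadj {u w : V} (hux : G.Adj u x) (huy : G.Adj u y) (hwx : G.Adj w x)
      (hwy : G.Adj w y) : ¬G.Adj w u := fun hwu ↦
    h4 _ (is4Clique_of_adj (hx.adj hχ hy hxy) hux.symm huy.symm hwx hwy hwu)
  refine h3 {e₁, e₂, e₃} (is3Clique_triple_iff.2 ⟨?_, ?_, ?_⟩) <;> rw [compl_adj]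
  · exact ⟨fun h ↦ hij (h ▸ rfl), hnadj h₂x h₂y h₁x h₁y⟩
  · exact ⟨fun h ↦ hik (h ▸ rfl), hnadj h₃x h₃y h₁x h₁y⟩
  · exact ⟨fun h ↦ hjk (h ▸ rfl), hnadj h₃x h₃y h₂x h₂y⟩

lemma card_le_four [Fintype V] (c : G.Coloring α) (hχ : Fintype.card α ≤ G.chromaticNumber)
    (h3 : Gᶜ.CliqueFree 3) (h4 : G.CliqueFree 4) : Fintype.card α ≤ 4 := by
  by_contra! h5
  obtain ⟨x, y, hxy, hx, hy⟩ := exists_isAlone_ne c hχ (by have := card_le_eight h3 h4; omega)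
  obtain ⟨z, hz, hzx, hzy⟩ := exists_isAlone_ne_ne hχ h3 h4 h5 hx hy hxy
  have := card_le_three_of_isAlone hχ h3 h4 hx hy hz hxy hzx.symm hzy.symm
  omega

end Coloring

end SimpleGraph

/-- If `G` is a finite simple graph that is `3K₁`-free (no independent set
of size 3, i.e. its complement is triangle-free) and `K_4`-free, then
`χ(G) ≤ 4`. -/
theorem chromatic_bound_K4 (V : Type*) [Fintype V] (G : SimpleGraph V)
    (h3K1 : Gᶜ.CliqueFree 3) (hKfree : G.CliqueFree 4) :
    G.chromaticNumber ≤ 4 := by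
  obtain ⟨C⟩ := G.colorable_chromaticNumber_of_fintype
  have hχ : (G.chromaticNumber.toNat : ℕ∞) = G.chromaticNumber :=
    ENat.natCast_toNat (G.chromaticNumber_le_card.trans_lt (ENat.natCast_lt_top _)).ne
  rw [← hχ]
  exact_mod_cast (by simpa using C.card_le_four (by simp [hχ]) h3K1 hKfree)
end

section
/- Let G be a finite simple graph that is 3K₁-free and K₇-free. Then the chromatic number of G satisfies χ(G) ≤ 12. -/
/-!
Work in the complement `H = Gᶜ`, which is triangle-free and has no independent set of size 7.
Counting edges between the neighbourhood and the non-neighbourhood of a vertex, together with a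
parity argument, gives Ramsey-type bounds: a triangle-free vertex set without independent
`k`-sets has at most 2, 5, 8, 13, 18, 24 vertices for `k = 2, …, 7` (the last two are weaker than
the true values 17 and 22, but suffice). In particular `n ≤ 24`.

Colour `G` by the edges of a maximum matching of `H` and the `u` unmatched vertices as
singletons. This uses `(n + u) / 2` colours, at most 12 when `u ≤ 2`, except if `n = 24` and
`u = 2`. As there are no augmenting paths of length 1 or 3, the unmatched vertices are
independent and every matching edge has an endpoint with no unmatched neighbour; these endpoints
together with the unmatched vertices contain no independent 7-set, so for `u ≥ 3` the Ramsey
bounds leave at most `11 - u` of them, hence at most 11 colours. Finally, if `n = 24` then `H` is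
6-regular, and if `u = 2`, the partners of the neighbours of the two unmatched vertices form two
6-sets that share at most 3 vertices and, again by maximality, have no edges between them; with
the two unmatched vertices they contain an independent 7-set.
-/

open Finset Equiv

open scoped Classical

namespace SimpleGraph

variable {V : Type*} {H : SimpleGraph V} {s : Finset V} {k m : ℕ}

noncomputable def nbrsIn (H : SimpleGraph V) (s : Finset V) (v : V) : Finset V :=
  {w ∈ s | H.Adj v w}

noncomputable def nonNbrsIn (H : SimpleGraph V) (s : Finset V) (v : V) : Finset V :=
  {w ∈ s.erase v | ¬ H.Adj v w}

@[simp]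
theorem mem_nbrsIn {v w : V} : w ∈ H.nbrsIn s v ↔ w ∈ s ∧ H.Adj v w :=
  mem_filter

@[simp]
theorem mem_nonNbrsIn {v w : V} :
    w ∈ H.nonNbrsIn s v ↔ w ≠ v ∧ w ∈ s ∧ ¬ H.Adj v w := by
  simp [nonNbrsIn, and_assoc]

theorem nbrsIn_subset (s : Finset V) (v : V) : H.nbrsIn s v ⊆ s := filter_subset _ _

theorem nonNbrsIn_subset (s : Finset V) (v : V) : H.nonNbrsIn s v ⊆ s :=
  (filter_subset _ _).trans (erase_subset _ _)

theorem card_nbrsIn_add_card_nonNbrsIn {v : V} (hv : v ∈ s) :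
    #(H.nbrsIn s v) + #(H.nonNbrsIn s v) + 1 = #s := by
  have hN : H.nbrsIn s v = {w ∈ s.erase v | H.Adj v w} := by
    rw [filter_erase, erase_eq_of_notMem (by simp), nbrsIn]
  rw [hN, nonNbrsIn, card_filter_add_card_filter_not, card_erase_add_one hv]

theorem card_nbrsIn_eq_add {v : V} (hv : v ∈ s) (u : V) :
    #(H.nbrsIn s u) = (if H.Adj u v then 1 else 0) + #(H.nbrsIn (H.nbrsIn s v) u) +
      #(H.nbrsIn (H.nonNbrsIn s v) u) := by
  set A := H.nbrsIn s u
  have h1 : H.nbrsIn (H.nbrsIn s v) u = {w ∈ A | H.Adj v w} := by ext; simp [A]; tauto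
  have h2 : H.nbrsIn (H.nonNbrsIn s v) u = {w ∈ A | ¬ H.Adj v w}.erase v := by
    ext; simp [A]; tauto
  have h3 : v ∈ {w ∈ A | ¬ H.Adj v w} ↔ H.Adj u v := by simp [A, hv]
  rw [h1, h2, card_erase_eq_ite,
    ← card_filter_add_card_filter_not (s := A) (p := fun w => H.Adj v w)]
  by_cases huv : H.Adj u v
  · have hpos := card_pos.2 ⟨v, h3.2 huv⟩
    rw [if_pos (h3.2 huv), if_pos huv]
    omega
  · rw [if_neg (mt h3.1 huv), if_neg huv]
    omega

theorem sum_card_nbrsIn_comm (A B : Finset V) :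
    ∑ a ∈ A, #(H.nbrsIn B a) = ∑ b ∈ B, #(H.nbrsIn A b) := by
  have := sum_card_bipartiteAbove_eq_sum_card_bipartiteBelow (s := A) (t := B) (r := H.Adj)
  simp only [bipartiteAbove, bipartiteBelow] at this
  simpa [nbrsIn, H.adj_comm _ _] using this

theorem even_sum_card_nbrsIn [Fintype V] (s : Finset V) :
    Even (∑ v ∈ s, #(H.nbrsIn s v)) := by
  let H' : SimpleGraph V :=
    { Adj a b := H.Adj a b ∧ a ∈ s ∧ b ∈ s
      symm := ⟨fun _ _ h => ⟨h.1.symm, h.2.2, h.2.1⟩⟩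
      loopless := ⟨fun _ h => h.1.ne rfl⟩ }
  have hdeg : ∀ v, H'.degree v = if v ∈ s then #(H.nbrsIn s v) else 0 := by
    intro v
    rw [← card_neighborFinset_eq_degree, neighborFinset_eq_filter]
    split_ifs with hv
    · congr 1; ext; simp [H', hv, and_comm]
    · simp [H', hv]
  have := H'.sum_degrees_eq_twice_card_edges
  simp only [hdeg, sum_ite_mem, univ_inter] at this
  exact ⟨_, this.trans (two_mul _)⟩

theorem CliqueFree.not_adj_of_adj_of_adj (hT : H.CliqueFree 3) {a b c : V} (hab : H.Adj a b)
    (hac : H.Adj a c) : ¬ H.Adj b c :=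
  fun hbc => hT {a, b, c} (is3Clique_triple_iff.2 ⟨hab, hac, hbc⟩)

theorem nbrsIn_nbrsIn_eq_empty (hT : H.CliqueFree 3) {u v : V}
    (hu : u ∈ H.nbrsIn s v) : H.nbrsIn (H.nbrsIn s v) u = ∅ :=
  eq_empty_of_forall_notMem fun w hw => by
    simp only [mem_nbrsIn] at hu hw
    exact hT.not_adj_of_adj_of_adj hu.2 hw.1.2 hw.2

theorem card_nbrsIn_of_mem_nbrsIn (hT : H.CliqueFree 3) {u v : V} (hv : v ∈ s)
    (hu : u ∈ H.nbrsIn s v) : #(H.nbrsIn s u) = #(H.nbrsIn (H.nonNbrsIn s v) u) + 1 := by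
  rw [card_nbrsIn_eq_add hv u, if_pos (mem_nbrsIn.1 hu).2.symm, nbrsIn_nbrsIn_eq_empty hT hu,
    card_empty]
  omega

theorem card_nbrsIn_of_mem_nonNbrsIn {v z : V} (hv : v ∈ s)
    (hz : z ∈ H.nonNbrsIn s v) :
    #(H.nbrsIn s z) = #(H.nbrsIn (H.nbrsIn s v) z) + #(H.nbrsIn (H.nonNbrsIn s v) z) := by
  rw [card_nbrsIn_eq_add hv z, if_neg fun hzv => (mem_nonNbrsIn.1 hz).2.2 hzv.symm, zero_add]

theorem isIndepSet_nbrsIn (hT : H.CliqueFree 3) (s : Finset V) (v : V) :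
    H.IsIndepSet (H.nbrsIn s v : Set V) :=
  (isIndepSet_neighborSet_of_triangleFree H hT v).mono fun _ hw => (mem_nbrsIn.1 hw).2

theorem IndepSetFreeOn.subset {s₁ s₂ : Set V} (hs : s₁ ⊆ s₂)
    (h : H.IndepSetFreeOn s₂ k) : H.IndepSetFreeOn s₁ k :=
  fun _ ht => h (ht.trans hs)

theorem eq_empty_of_indepSetFreeOn_one (h : H.IndepSetFreeOn s 1) : s = ∅ :=
  eq_empty_of_forall_notMem fun v hv =>
    h (t := {v}) (by simpa using hv) ⟨by simp, card_singleton v⟩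

theorem IndepSetFreeOn.card_lt {t : Finset V} (h : H.IndepSetFreeOn s k)
    (hts : t ⊆ s) (ht : H.IsIndepSet (t : Set V)) : #t < k := by
  by_contra! hk
  obtain ⟨u, hut, hu⟩ := exists_subset_card_eq hk
  exact h (coe_subset.2 (hut.trans hts)) ⟨ht.mono (coe_subset.2 hut), hu⟩

theorem IndepSetFreeOn.of_isIndepSet_of_nonadj {s' t : Finset V}
    (h : H.IndepSetFreeOn s (k + #t)) (hs' : s' ⊆ s) (hts : t ⊆ s)
    (ht : H.IsIndepSet (t : Set V)) (hdisj : Disjoint s' t)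
    (hnadj : ∀ a ∈ s', ∀ b ∈ t, ¬ H.Adj a b) : H.IndepSetFreeOn s' k := by
  intro u hu hui
  have hu' : u ⊆ s' := coe_subset.1 hu
  refine h (t := u ∪ t) (by simpa using ⟨hu'.trans hs', hts⟩) ⟨?_, ?_⟩
  · intro a ha b hb hab
    simp only [coe_union, Set.mem_union, mem_coe] at ha hb
    rcases ha with ha | ha <;> rcases hb with hb | hb
    · exact hui.isIndepSet ha hb hab
    · exact hnadj a (hu' ha) b hb
    · exact fun hba => hnadj b (hu' hb) a ha hba.symm
    · exact ht ha hb hab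
  · rw [card_union_of_disjoint (hdisj.mono_left hu'), hui.card_eq]

theorem IndepSetFreeOn.nonNbrsIn (h : H.IndepSetFreeOn s (k + 1))
    {v : V} (hv : v ∈ s) : H.IndepSetFreeOn (H.nonNbrsIn s v) k :=
  h.of_isIndepSet_of_nonadj (t := {v}) (nonNbrsIn_subset s v) (singleton_subset_iff.2 hv)
    (by simp) (disjoint_singleton_right.2 fun hv' => (mem_nonNbrsIn.1 hv').1 rfl)
    fun a ha b hb => by
      rw [mem_singleton.1 hb]
      exact fun hav => (mem_nonNbrsIn.1 ha).2.2 hav.symm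

theorem IndepSetFreeOn.card_nbrsIn_lt (hT : H.CliqueFree 3)
    (h : H.IndepSetFreeOn s k) (v : V) : #(H.nbrsIn s v) < k :=
  h.card_lt (nbrsIn_subset s v) (isIndepSet_nbrsIn hT s v)

theorem IndepSetFreeOn.card_nbrsIn_eq (hT : H.CliqueFree 3)
    (hm : ∀ t : Finset V, H.IndepSetFreeOn t k → #t ≤ m) (h : H.IndepSetFreeOn s (k + 1))
    (hs : #s = k + 1 + m) {v : V} (hv : v ∈ s) : #(H.nbrsIn s v) = k := by
  have := h.card_nbrsIn_lt hT v
  have := hm _ (h.nonNbrsIn hv)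
  have := card_nbrsIn_add_card_nonNbrsIn (H := H) hv
  omega

theorem IndepSetFreeOn.card_le_succ_add (hT : H.CliqueFree 3)
    (hm : ∀ t : Finset V, H.IndepSetFreeOn t k → #t ≤ m) (h : H.IndepSetFreeOn s (k + 1)) :
    #s ≤ k + 1 + m := by
  obtain rfl | ⟨v, hv⟩ := s.eq_empty_or_nonempty
  · simp
  have := h.card_nbrsIn_lt hT v
  have := hm _ (h.nonNbrsIn hv)
  have := card_nbrsIn_add_card_nonNbrsIn (H := H) hv
  omega

theorem IndepSetFreeOn.card_le_add_of_odd [Fintype V] (hT : H.CliqueFree 3)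
    (hm : ∀ t : Finset V, H.IndepSetFreeOn t k → #t ≤ m) (hk : Odd k) (hm' : Odd m)
    (h : H.IndepSetFreeOn s (k + 1)) : #s ≤ k + m := by
  by_contra! hs
  obtain ⟨s₀, hs₀, hcard⟩ := exists_subset_card_eq (show k + 1 + m ≤ #s by omega)
  have h₀ := h.subset (coe_subset.2 hs₀)
  have hsum : ∑ v ∈ s₀, #(H.nbrsIn s₀ v) = (k + 1 + m) * k := by
    rw [sum_congr rfl fun v hv => h₀.card_nbrsIn_eq hT hm hcard hv, sum_const, hcard,
      smul_eq_mul]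
  have heven := even_sum_card_nbrsIn (H := H) s₀
  rw [hsum, Nat.even_mul, Nat.even_iff, Nat.even_iff] at heven
  obtain ⟨a, rfl⟩ := hk
  obtain ⟨b, rfl⟩ := hm'
  omega

theorem IndepSetFreeOn.card_le_two (hT : H.CliqueFree 3) (h : H.IndepSetFreeOn s 2) :
    #s ≤ 2 :=
  h.card_le_succ_add hT (m := 0) fun _ ht => by simp [eq_empty_of_indepSetFreeOn_one ht]

theorem exists_isNIndepSet_two (hT : H.CliqueFree 3) (hs : 3 ≤ #s) :
    ∃ t ⊆ s, H.IsNIndepSet 2 t := by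
  by_contra! h
  have := IndepSetFreeOn.card_le_two hT (s := s) fun t ht => h t (coe_subset.1 ht)
  omega

theorem IndepSetFreeOn.card_le_five (hT : H.CliqueFree 3) (h : H.IndepSetFreeOn s 3) :
    #s ≤ 5 :=
  h.card_le_succ_add hT fun _ ht => ht.card_le_two hT

theorem IndepSetFreeOn.card_le_eight [Fintype V] (hT : H.CliqueFree 3)
    (h : H.IndepSetFreeOn s 4) : #s ≤ 8 :=
  h.card_le_add_of_odd hT (fun _ ht => ht.card_le_five hT) (by decide) (by decide)

theorem IndepSetFreeOn.card_le_thirteen [Fintype V] (hT : H.CliqueFree 3)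
    (h : H.IndepSetFreeOn s 5) : #s ≤ 13 :=
  h.card_le_succ_add hT fun _ ht => ht.card_le_eight hT

theorem IndepSetFreeOn.card_le_eighteen [Fintype V] (hT : H.CliqueFree 3)
    (h : H.IndepSetFreeOn s 6) : #s ≤ 18 :=
  h.card_le_add_of_odd hT (fun _ ht => ht.card_le_thirteen hT) (by decide) (by decide)

theorem IndepSetFreeOn.four_le_card_nbrsIn [Fintype V] (hT : H.CliqueFree 3)
    (h : H.IndepSetFreeOn s 6) (hs : #s = 18) {v : V} (hv : v ∈ s) : 4 ≤ #(H.nbrsIn s v) := by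
  have := (h.nonNbrsIn hv).card_le_thirteen hT
  have := card_nbrsIn_add_card_nonNbrsIn (H := H) hv
  omega

theorem IndepSetFreeOn.card_filter_nbrsIn_eq_add_three [Fintype V] (hT : H.CliqueFree 3)
    (h : H.IndepSetFreeOn s 6) (hs : #s = 18) {v : V} (hv : v ∈ s)
    (hv4 : #(H.nbrsIn s v) = 4) :
    #{u ∈ H.nbrsIn s v | #(H.nbrsIn s u) = 4} =
      #{z ∈ H.nonNbrsIn s v | #(H.nbrsIn s z) = 4} + 3 := by
  have hcard : #(H.nonNbrsIn s v) = 4 + 1 + 8 := by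
    have := card_nbrsIn_add_card_nonNbrsIn (H := H) hv
    omega
  have hdeg : ∀ w ∈ s, 4 ≤ #(H.nbrsIn s w) ∧ #(H.nbrsIn s w) < 6 := fun w hw =>
    ⟨h.four_le_card_nbrsIn hT hs hw, h.card_nbrsIn_lt hT w⟩
  -- double count the edges between the neighbours and the non-neighbours of `v`
  have hN : ∀ u ∈ H.nbrsIn s v,
      #(H.nbrsIn (H.nonNbrsIn s v) u) + (if #(H.nbrsIn s u) = 4 then 1 else 0) = 4 := by
    intro u hu
    have := card_nbrsIn_of_mem_nbrsIn hT hv hu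
    have := hdeg u (nbrsIn_subset s v hu)
    split_ifs <;> omega
  have hnon : ∀ z ∈ H.nonNbrsIn s v,
      #(H.nbrsIn (H.nbrsIn s v) z) + (if #(H.nbrsIn s z) = 4 then 1 else 0) = 1 := by
    intro z hz
    have := card_nbrsIn_of_mem_nonNbrsIn hv hz
    have := (h.nonNbrsIn hv).card_nbrsIn_eq hT (fun _ ht => ht.card_le_eight hT) hcard hz
    have := hdeg z (nonNbrsIn_subset s v hz)
    split_ifs <;> omega
  have hsumN := sum_congr rfl hN
  have hsumS' := sum_congr rfl hnon
  rw [sum_add_distrib, ← card_filter, sum_const, hv4, smul_eq_mul] at hsumN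
  rw [sum_add_distrib, ← card_filter, sum_const, hcard, smul_eq_mul] at hsumS'
  have := sum_card_nbrsIn_comm (H := H) (H.nbrsIn s v) (H.nonNbrsIn s v)
  omega

theorem IndepSetFreeOn.card_nbrsIn_eq_five [Fintype V] (hT : H.CliqueFree 3)
    (h : H.IndepSetFreeOn s 6) (hs : #s = 18) {v : V} (hv : v ∈ s) :
    #(H.nbrsIn s v) = 5 := by
  have hlt := h.card_nbrsIn_lt hT v
  by_contra h5
  have hv4 : #(H.nbrsIn s v) = 4 := by have := h.four_le_card_nbrsIn hT hs hv; omega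
  have hD := h.card_filter_nbrsIn_eq_add_three hT hs hv hv4
  obtain ⟨q, hq⟩ : {u ∈ H.nbrsIn s v | #(H.nbrsIn s u) = 4}.Nonempty := card_pos.1 (by omega)
  obtain ⟨⟨hqs, hvq⟩, hq4⟩ : (q ∈ s ∧ H.Adj v q) ∧ #(H.nbrsIn s q) = 4 := by
    simpa using hq
  -- two further degree-4 neighbours of `v` are degree-4 non-neighbours of `q`
  have hsub : {u ∈ H.nbrsIn s v | #(H.nbrsIn s u) = 4}.erase q ⊆
      {z ∈ H.nonNbrsIn s q | #(H.nbrsIn s z) = 4} := by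
    intro z hz
    simp only [mem_erase, mem_filter, mem_nbrsIn] at hz
    simp only [mem_filter, mem_nonNbrsIn]
    exact ⟨⟨hz.1, hz.2.1.1, hT.not_adj_of_adj_of_adj hvq hz.2.1.2⟩, hz.2.2⟩
  have hDq := h.card_filter_nbrsIn_eq_add_three hT hs hqs hq4
  have := card_le_card hsub
  have := card_erase_of_mem hq
  have := card_filter_le (H.nbrsIn s q) fun u => #(H.nbrsIn s u) = 4
  omega

theorem IndepSetFreeOn.card_nonNbrsIn_ne_eighteen [Fintype V] (hT : H.CliqueFree 3)
    (h : H.IndepSetFreeOn s 7) (hs : 24 ≤ #s) {v : V} (hv : v ∈ s) :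
    #(H.nonNbrsIn s v) ≠ 18 := by
  intro h18
  have hmin : ∀ w ∈ s, 5 ≤ #(H.nbrsIn s w) := by
    intro w hw
    have := (h.nonNbrsIn hw).card_le_eighteen hT
    have := card_nbrsIn_add_card_nonNbrsIn (H := H) hw
    omega
  have hN : ∀ u ∈ H.nbrsIn s v, 4 ≤ #(H.nbrsIn (H.nonNbrsIn s v) u) := by
    intro u hu
    have := card_nbrsIn_of_mem_nbrsIn hT hv hu
    have := hmin u (nbrsIn_subset s v hu)
    omega
  have hnon : ∀ z ∈ H.nonNbrsIn s v, #(H.nbrsIn (H.nbrsIn s v) z) ≤ 1 := by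
    intro z hz
    have := card_nbrsIn_of_mem_nonNbrsIn hv hz
    have := (h.nonNbrsIn hv).card_nbrsIn_eq_five hT h18 hz
    have := h.card_nbrsIn_lt hT z
    omega
  have h1 := card_nsmul_le_sum (H.nbrsIn s v) _ 4 hN
  have h2 := sum_le_card_nsmul (H.nonNbrsIn s v) _ 1 hnon
  have := sum_card_nbrsIn_comm (H := H) (H.nbrsIn s v) (H.nonNbrsIn s v)
  have := card_nbrsIn_add_card_nonNbrsIn (H := H) hv
  simp only [smul_eq_mul] at h1 h2
  omega

theorem IndepSetFreeOn.card_le_twentyFour [Fintype V] (hT : H.CliqueFree 3)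
    (h : H.IndepSetFreeOn s 7) : #s ≤ 24 := by
  by_contra! hs
  obtain ⟨s₀, hs₀, hcard⟩ := exists_subset_card_eq (show 25 ≤ #s from hs)
  have h₀ := h.subset (coe_subset.2 hs₀)
  obtain ⟨v, hv⟩ : s₀.Nonempty := card_pos.1 (by omega)
  have := h₀.card_nbrsIn_lt hT v
  have := (h₀.nonNbrsIn hv).card_le_eighteen hT
  have := card_nbrsIn_add_card_nonNbrsIn (H := H) hv
  exact h₀.card_nonNbrsIn_ne_eighteen hT (by omega) hv (by omega)

theorem IndepSetFreeOn.card_nbrsIn_eq_six [Fintype V] (hT : H.CliqueFree 3)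
    (h : H.IndepSetFreeOn s 7) (hs : #s = 24) {v : V} (hv : v ∈ s) : #(H.nbrsIn s v) = 6 := by
  have := h.card_nbrsIn_lt hT v
  have := (h.nonNbrsIn hv).card_le_eighteen hT
  have := h.card_nonNbrsIn_ne_eighteen hT hs.ge hv
  have := card_nbrsIn_add_card_nonNbrsIn (H := H) hv
  omega

theorem IndepSetFreeOn.card_nbrsIn_nbrsIn_le_three [Fintype V] (hT : H.CliqueFree 3)
    (h : H.IndepSetFreeOn s 7) (hs : #s = 24) {x y : V} (hx : x ∈ s)
    (hy : y ∈ H.nonNbrsIn s x) : #(H.nbrsIn (H.nbrsIn s x) y) ≤ 3 := by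
  have := ((h.nonNbrsIn hx).nonNbrsIn hy).card_le_thirteen hT
  have := card_nbrsIn_add_card_nonNbrsIn (H := H) hx
  have := card_nbrsIn_add_card_nonNbrsIn (H := H) hy
  have := card_nbrsIn_of_mem_nonNbrsIn hx hy
  have := h.card_nbrsIn_eq_six hT hs hx
  have := h.card_nbrsIn_eq_six hT hs (nonNbrsIn_subset s x hy)
  omega

theorem IndepSetFreeOn.of_union_of_nonadj (hT : H.CliqueFree 3) {A B : Finset V}
    (h : H.IndepSetFreeOn (A ∪ B : Finset V) (k + 2)) (hAB : Disjoint A B)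
    (hnadj : ∀ a ∈ A, ∀ b ∈ B, ¬ H.Adj a b) (hB : 3 ≤ #B) : H.IndepSetFreeOn A k := by
  obtain ⟨T, hTB, hT2⟩ := exists_isNIndepSet_two hT hB
  rw [← hT2.card_eq] at h
  exact h.of_isIndepSet_of_nonadj subset_union_left (hTB.trans subset_union_right)
    hT2.isIndepSet (hAB.mono_right hTB) fun a ha b hb => hnadj a ha b (hTB hb)

theorem not_indepSetFreeOn_union_five (hT : H.CliqueFree 3) {X Y : Finset V}
    (hX : #X = 6) (hY : #Y = 6) (hXY : #(X ∩ Y) ≤ 3)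
    (hcross : ∀ p ∈ X, ∀ q ∈ Y, p ≠ q → ¬ H.Adj p q) :
    ¬ H.IndepSetFreeOn (X ∪ Y : Finset V) 5 := by
  intro h5
  have := card_sdiff_add_card_inter X Y
  have := card_sdiff_add_card_inter Y X
  rw [inter_comm] at this
  rcases (X ∩ Y).eq_empty_or_nonempty with hXY0 | ⟨p, hp⟩
  · have hdisj := disjoint_iff_inter_eq_empty.2 hXY0
    have := (h5.of_union_of_nonadj (k := 3) hT hdisj
      (fun a ha b hb => hcross a ha b hb (Finset.disjoint_left.1 hdisj ha ∘ (· ▸ hb)))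
      (by omega)).card_le_five hT
    omega
  · obtain ⟨hpX, hpY⟩ := mem_inter.1 hp
    -- `p` lies in both `X` and `Y`, so it has no neighbour in `X \ Y ∪ Y \ X`
    have h4 : H.IndepSetFreeOn (X \ Y ∪ Y \ X : Finset V) 4 := by
      refine (h5 : H.IndepSetFreeOn _ (4 + #{p})).of_isIndepSet_of_nonadj
        (union_subset_union sdiff_subset sdiff_subset)
        (singleton_subset_iff.2 (mem_union_left _ hpX)) (by simp)
        (disjoint_singleton_right.2 (by simp [hpX, hpY])) fun q hq p' hp' => ?_
      rw [mem_singleton.1 hp']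
      rcases mem_union.1 hq with hq | hq <;> obtain ⟨hq₁, hq₂⟩ := mem_sdiff.1 hq
      · exact hcross q hq₁ p hpY fun h => hq₂ (h ▸ hpY)
      · exact fun h => hcross p hpX q hq₁ (fun h' => hq₂ (h' ▸ hpX)) h.symm
    have := (h4.of_union_of_nonadj hT disjoint_sdiff_sdiff
      (fun a ha b hb => hcross a (mem_sdiff.1 ha).1 b (mem_sdiff.1 hb).1
        fun h => (mem_sdiff.1 ha).2 (h ▸ (mem_sdiff.1 hb).1))
      (by omega)).card_le_two hT
    omega

/-- A matching of `H`, encoded as the involution exchanging the endpoints of each matching edge;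
the unmatched vertices are its fixed points. -/
structure IsMatchingInvolution (H : SimpleGraph V) (f : Perm V) : Prop where
  involutive : Function.Involutive f
  adj : ∀ v, f v ≠ v → H.Adj v (f v)

def IsMaxMatchingInvolution [Fintype V] (H : SimpleGraph V) (f : Perm V) : Prop :=
  H.IsMatchingInvolution f ∧ ∀ g, H.IsMatchingInvolution g → #g.support ≤ #f.support

theorem exists_isMaxMatchingInvolution [Fintype V] (H : SimpleGraph V) :
    ∃ f, H.IsMaxMatchingInvolution f := by
  obtain ⟨f, hf, hmax⟩ := exists_max_image {g : Perm V | H.IsMatchingInvolution g}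
    (fun g => #g.support)
    ⟨1, mem_filter.2 ⟨mem_univ _, fun _ => rfl, fun _ h => (h rfl).elim⟩⟩
  exact ⟨f, (mem_filter.1 hf).2, fun g hg => hmax g (mem_filter.2 ⟨mem_univ _, hg⟩)⟩

variable {f : Perm V}

theorem IsMatchingInvolution.apply_ne_of_apply_eq (hf : H.IsMatchingInvolution f) {v w : V}
    (hv : f v = v) (hw : w ≠ v) : f w ≠ v :=
  fun h => hw (by rw [← hf.involutive w, h, hv])

theorem IsMaxMatchingInvolution.not_adj_of_apply_eq [Fintype V]
    (hf : H.IsMaxMatchingInvolution f) {x y : V} (hx : f x = x) (hy : f y = y) : ¬ H.Adj x y := by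
  intro hxy
  have hdisj : (swap x y).Disjoint f := by
    intro w
    by_cases hwx : w = x
    · exact .inr (hwx ▸ hx)
    by_cases hwy : w = y
    · exact .inr (hwy ▸ hy)
    exact .inl (swap_apply_of_ne_of_ne hwx hwy)
  -- `swap x y * f` is the matching `f` with the edge `xy` added
  have hg : H.IsMatchingInvolution (swap x y * f) := by
    refine ⟨fun w => ?_, fun w hw => ?_⟩
    · rw [← Perm.mul_apply, ← mul_assoc, mul_assoc _ f, ← hdisj.commute.eq, ← mul_assoc,
        swap_mul_self, one_mul, Perm.mul_apply, hf.1.involutive]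
    by_cases hwx : w = x
    · subst hwx; simpa [hx] using hxy
    by_cases hwy : w = y
    · subst hwy; simpa [hy] using hxy.symm
    rw [Perm.mul_apply, swap_apply_of_ne_of_ne (hf.1.apply_ne_of_apply_eq hx hwx)
      (hf.1.apply_ne_of_apply_eq hy hwy)] at hw ⊢
    exact hf.1.adj w hw
  have := hf.2 _ hg
  rw [hdisj.card_support_mul, Perm.card_support_swap hxy.ne] at this
  omega

section ConjSwap

variable {x a : V}

theorem IsMatchingInvolution.conj_swap_apply_of_ne (hf : H.IsMatchingInvolution f)
    (hx : f x = x) {w : V} (hwx : w ≠ x) (hwa : w ≠ a) (hwb : w ≠ f a) :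
    (swap (f a) x * f * swap (f a) x) w = f w := by
  have hfwb : f w ≠ f a := fun h => hwa (f.injective h)
  rw [Perm.mul_apply, Perm.mul_apply, swap_apply_of_ne_of_ne hwb hwx,
    swap_apply_of_ne_of_ne hfwb (hf.apply_ne_of_apply_eq hx hwx)]

theorem conj_swap_apply_apply (hx : f x = x) :
    (swap (f a) x * f * swap (f a) x) (f a) = f a := by
  simp [hx]

/-- Conjugating by `swap (f a) x` replaces the matching edge `a (f a)` by `x a`: the unmatched
vertex `x` takes over `a`, and `f a` becomes unmatched. -/
theorem IsMatchingInvolution.conj_swap (hf : H.IsMatchingInvolution f) (hx : f x = x)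
    (hxa : H.Adj x a) (ha : f a ≠ a) :
    H.IsMatchingInvolution (swap (f a) x * f * swap (f a) x) := by
  have hab : a ≠ f a := ha.symm
  have hτa : swap (f a) x a = a := swap_apply_of_ne_of_ne hab hxa.ne.symm
  have hff : ∀ v, f (f v) = v := hf.involutive
  refine ⟨fun w => by simp [hff], fun w hw => ?_⟩
  by_cases hwx : w = x
  · subst hwx
    simpa [hff, hτa] using hxa
  by_cases hwa : w = a
  · subst hwa
    simpa [hτa] using hxa.symm
  by_cases hwb : w = f a
  · rw [hwb, conj_swap_apply_apply hx] at hw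
    exact absurd rfl hw
  rw [hf.conj_swap_apply_of_ne hx hwx hwa hwb] at hw ⊢
  exact hf.adj w hw

theorem IsMaxMatchingInvolution.conj_swap [Fintype V] (hf : H.IsMaxMatchingInvolution f)
    (hx : f x = x) (hxa : H.Adj x a) (ha : f a ≠ a) :
    H.IsMaxMatchingInvolution (swap (f a) x * f * swap (f a) x) := by
  refine ⟨hf.1.conj_swap hx hxa ha, fun g hg => ?_⟩
  have hconj : swap (f a) x * f * swap (f a) x = swap (f a) x * f * (swap (f a) x)⁻¹ := by
    rw [swap_inv]
  rw [hconj, Perm.card_support_conj]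
  exact hf.2 g hg

end ConjSwap

variable [Fintype V]

theorem IsMaxMatchingInvolution.apply_ne_of_adj (hf : H.IsMaxMatchingInvolution f)
    {x y a : V} (hx : f x = x) (hy : f y = y) (hxa : H.Adj x a) : f a ≠ y := by
  intro h
  rw [← h, hf.1.involutive] at hy
  exact hf.not_adj_of_apply_eq hx hy.symm hxa

theorem IsMaxMatchingInvolution.not_adj_apply (hT : H.CliqueFree 3)
    (hf : H.IsMaxMatchingInvolution f) {x y a : V} (hx : f x = x) (hy : f y = y)
    (hxa : H.Adj x a) : ¬ H.Adj y (f a) := by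
  have ha : f a ≠ a := fun ha => hf.not_adj_of_apply_eq hx ha hxa
  obtain rfl | hxy := eq_or_ne x y
  · exact hT.not_adj_of_adj_of_adj hxa.symm (hf.1.adj a ha)
  -- augment along the alternating path `x, a, f a, y` after moving `x` onto `a`
  have hya : y ≠ a := fun h => ha (h ▸ hy)
  have hyb : y ≠ f a := (hf.1.apply_ne_of_apply_eq hy hya.symm).symm
  have hgy := hf.1.conj_swap_apply_of_ne hx hxy.symm hya hyb
  rw [hy] at hgy
  exact (hf.conj_swap hx hxa ha).not_adj_of_apply_eq hgy (conj_swap_apply_apply hx)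

theorem IsMaxMatchingInvolution.not_adj_apply_apply (hT : H.CliqueFree 3)
    (hf : H.IsMaxMatchingInvolution f) {x y a₁ a₂ : V} (hx : f x = x) (hy : f y = y)
    (hxy : x ≠ y) (hxa : H.Adj x a₁) (hya : H.Adj y a₂) (ha : a₁ ≠ a₂) :
    ¬ H.Adj (f a₁) (f a₂) := by
  by_cases ha₁ : f a₁ = a₁
  · exact absurd hxa (hf.not_adj_of_apply_eq hx ha₁)
  by_cases ha₂ : a₂ = f a₁
  · exact absurd (ha₂ ▸ hya) (hf.not_adj_apply hT hx hy hxa)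
  have ha₂x : a₂ ≠ x := fun h => hf.not_adj_of_apply_eq hy hx (h ▸ hya)
  have hya₁ : y ≠ a₁ := fun h => ha₁ (h ▸ hy)
  have hyb : y ≠ f a₁ := (hf.1.apply_ne_of_apply_eq hy hya₁.symm).symm
  have hgy := hf.1.conj_swap_apply_of_ne hx hxy.symm hya₁ hyb
  rw [hy] at hgy
  have := (hf.conj_swap hx hxa ha₁).not_adj_apply hT hgy (conj_swap_apply_apply hx) hya
  rwa [hf.1.conj_swap_apply_of_ne hx ha₂x ha.symm ha₂] at this

theorem colorable_of_isMatchingInvolution_compl {G : SimpleGraph V}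
    (hf : Gᶜ.IsMatchingInvolution f) : G.Colorable #(univ.image fun v => s(v, f v)) := by
  have C : G.Coloring (univ.image fun v => s(v, f v)) :=
    Coloring.mk (fun v => ⟨s(v, f v), mem_image_of_mem _ (mem_univ v)⟩) fun {v w} hvw hc => by
      rcases Sym2.eq_iff.1 (congrArg Subtype.val hc) with ⟨rfl, -⟩ | ⟨rfl, -⟩
      · exact G.loopless.irrefl v hvw
      · exact ((compl_adj G w (f w)).1 (hf.adj w hvw.ne)).2 hvw.symm
  simpa only [Fintype.card_coe] using C.colorable

theorem _root_.Function.Involutive.two_mul_card_image_sym2_le (hf : Function.Involutive f) :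
    2 * #(univ.image fun v => s(v, f v)) ≤ Fintype.card V + #f.supportᶜ := by
  set c : V → Sym2 V := fun v => s(v, f v)
  -- every colour class meeting the support is a pair `{v, f v}`
  have hpairs : #(f.support.image c) * 2 ≤ #f.support := by
    rw [card_eq_sum_card_image c f.support]
    refine card_nsmul_le_sum _ _ 2 fun z hz => ?_
    obtain ⟨v, hv, rfl⟩ := mem_image.1 hz
    have hfv : f v ≠ v := Perm.mem_support.1 hv
    refine le_of_eq_of_le (card_pair hfv.symm).symm (card_le_card fun w hw => ?_)
    rcases mem_insert.1 hw with rfl | hw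
    · exact mem_filter.2 ⟨hv, rfl⟩
    · rw [mem_singleton.1 hw]
      exact mem_filter.2 ⟨Perm.apply_mem_support.2 hv, by simp [c, hf v, Sym2.eq_swap]⟩
  have himage : univ.image c = f.supportᶜ.image c ∪ f.support.image c := by
    rw [← image_union, union_comm, union_compl]
  have := card_union_le (f.supportᶜ.image c) (f.support.image c)
  have := card_image_le (s := f.supportᶜ) (f := c)
  have := card_compl_add_card f.support
  rw [himage]
  omega

theorem IsMaxMatchingInvolution.exists_card_image_le (hT : H.CliqueFree 3)
    (hf : H.IsMaxMatchingInvolution f) :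
    ∃ B ⊆ f.support, (∀ b ∈ B, ∀ u ∉ f.support, ¬ H.Adj u b) ∧
      #(univ.image fun v => s(v, f v)) ≤ #f.supportᶜ + #B := by
  set B := {b ∈ f.support | ∀ u ∉ f.support, ¬ H.Adj u b}
  refine ⟨B, filter_subset _ _, fun b hb => (mem_filter.1 hb).2, ?_⟩
  have hsub :
      univ.image (fun v => s(v, f v)) ⊆ (f.supportᶜ ∪ B).image fun v => s(v, f v) := by
    intro z hz
    obtain ⟨v, -, rfl⟩ := mem_image.1 hz
    by_cases hv : v ∈ f.supportᶜ ∪ B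
    · exact mem_image_of_mem _ hv
    simp only [B, mem_union, mem_compl, mem_filter, not_or, not_not, not_and, not_forall] at hv
    -- `v` is matched and has an unmatched neighbour `u`, so its partner `f v` has none
    obtain ⟨u, hu, huv⟩ := hv.2 hv.1
    refine mem_image.2 ⟨f v, mem_union_right _ (mem_filter.2 ⟨Perm.apply_mem_support.2 hv.1,
      fun u' hu' => hf.not_adj_apply hT (Perm.notMem_support.1 hu) (Perm.notMem_support.1 hu')
        huv⟩), by simp [hf.1.involutive v, Sym2.eq_swap]⟩
  calc _ ≤ #((f.supportᶜ ∪ B).image fun v => s(v, f v)) := card_le_card hsub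
    _ ≤ #(f.supportᶜ ∪ B) := card_image_le
    _ ≤ _ := card_union_le _ _

theorem IsMaxMatchingInvolution.indepSetFreeOn_image_nbrsIn_union (hT : H.CliqueFree 3)
    (hI : H.IndepSetFreeOn (univ : Finset V) 7) (hf : H.IsMaxMatchingInvolution f) {x y : V}
    (hx : f x = x) (hy : f y = y) (hxy : x ≠ y) :
    H.IndepSetFreeOn ((H.nbrsIn univ x).image f ∪ (H.nbrsIn univ y).image f : Finset V) 5 := by
  have hpartner : ∀ p ∈ (H.nbrsIn univ x).image f ∪ (H.nbrsIn univ y).image f,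
      ∀ b ∈ ({x, y} : Finset V), p ≠ b ∧ ¬ H.Adj p b := by
    intro p hp b hb
    have hb : f b = b := by
      rcases mem_insert.1 hb with rfl | hb <;> [assumption; rwa [mem_singleton.1 hb]]
    simp only [mem_union, mem_image, mem_nbrsIn, mem_univ, true_and] at hp
    rcases hp with ⟨a, ha, rfl⟩ | ⟨a, ha, rfl⟩
    · exact ⟨hf.apply_ne_of_adj hx hb ha, fun h => hf.not_adj_apply hT hx hb ha h.symm⟩
    · exact ⟨hf.apply_ne_of_adj hy hb ha, fun h => hf.not_adj_apply hT hy hb ha h.symm⟩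
  have hI' : H.IndepSetFreeOn (univ : Finset V) (5 + #{x, y}) := by rwa [card_pair hxy]
  refine hI'.of_isIndepSet_of_nonadj (subset_univ _) (subset_univ _) ?_
    (Finset.disjoint_left.2 fun p hp hb => (hpartner p hp p hb).1 rfl)
    fun p hp b hb => (hpartner p hp b hb).2
  intro a ha b hb _
  simp only [coe_insert, coe_singleton, Set.mem_insert_iff, Set.mem_singleton_iff] at ha hb
  exact hf.not_adj_of_apply_eq (by rcases ha with rfl | rfl <;> assumption)
    (by rcases hb with rfl | rfl <;> assumption)

theorem IsMaxMatchingInvolution.card_support_compl_ne_two (hT : H.CliqueFree 3)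
    (hI : H.IndepSetFreeOn (univ : Finset V) 7) (hn : Fintype.card V = 24)
    (hf : H.IsMaxMatchingInvolution f) : #f.supportᶜ ≠ 2 := by
  intro hU
  obtain ⟨x, y, hxy, hU⟩ := card_eq_two.1 hU
  have hx : f x = x := Perm.notMem_support.1 (mem_compl.1 (hU ▸ mem_insert_self x {y}))
  have hy : f y = y := Perm.notMem_support.1 (mem_compl.1 (hU ▸ mem_insert_of_mem
    (mem_singleton_self y)))
  have hdeg : ∀ v, #((H.nbrsIn univ v).image f) = 6 := fun v => by
    rw [card_image_of_injective _ f.injective, hI.card_nbrsIn_eq_six hT hn (mem_univ v)]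
  have hcommon : #((H.nbrsIn univ x).image f ∩ (H.nbrsIn univ y).image f) ≤ 3 := by
    rw [← image_inter _ _ f.injective, card_image_of_injective _ f.injective]
    have hy' : y ∈ H.nonNbrsIn univ x := by
      simpa [hxy.symm] using hf.not_adj_of_apply_eq hx hy
    convert hI.card_nbrsIn_nbrsIn_le_three hT hn (mem_univ x) hy' using 2
    ext; simp
  refine not_indepSetFreeOn_union_five hT (hdeg x) (hdeg y) hcommon (fun p hp q hq hpq => ?_)
    (hf.indepSetFreeOn_image_nbrsIn_union hT hI hx hy hxy)
  obtain ⟨a₁, ha₁, rfl⟩ := mem_image.1 hp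
  obtain ⟨a₂, ha₂, rfl⟩ := mem_image.1 hq
  exact hf.not_adj_apply_apply hT hx hy hxy (mem_nbrsIn.1 ha₁).2 (mem_nbrsIn.1 ha₂).2
    fun h => hpq (h ▸ rfl)

theorem IsMaxMatchingInvolution.card_image_le_twelve (hT : H.CliqueFree 3)
    (hI : H.IndepSetFreeOn (univ : Finset V) 7) (hf : H.IsMaxMatchingInvolution f) :
    #(univ.image fun v => s(v, f v)) ≤ 12 := by
  obtain ⟨B, hBs, hB, hcard⟩ := hf.exists_card_image_le hT
  have hU : H.IsIndepSet ((f.supportᶜ : Finset V) : Set V) := fun u hu w hw _ =>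
    hf.not_adj_of_apply_eq (by simpa using hu) (by simpa using hw)
  have hBfree : ∀ k, k + #f.supportᶜ = 7 → H.IndepSetFreeOn B k := fun k hk =>
    (hk ▸ hI).of_isIndepSet_of_nonadj (subset_univ _) (subset_univ _) hU
      (disjoint_compl_right.mono_left hBs) fun b hb u hu h =>
        hB b hb u (mem_compl.1 hu) h.symm
  have h2 := hf.1.involutive.two_mul_card_image_sym2_le
  have hn : Fintype.card V ≤ 24 := hI.card_le_twentyFour hT
  have hn2 : #f.supportᶜ = 2 → Fintype.card V ≠ 24 := fun h h24 =>
    hf.card_support_compl_ne_two hT hI h24 h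
  have hU7 : #f.supportᶜ < 7 := hI.card_lt (subset_univ _) hU
  interval_cases #f.supportᶜ
  any_goals omega
  · have := (hBfree 4 rfl).card_le_eight hT; omega
  · have := (hBfree 3 rfl).card_le_five hT; omega
  · have := (hBfree 2 rfl).card_le_two hT; omega
  · rw [eq_empty_of_indepSetFreeOn_one (hBfree 1 rfl), card_empty] at hcard; omega

end SimpleGraph

/-- If `G` is a finite simple graph that is `3K₁`-free (no independent set
of size 3, i.e. its complement is triangle-free) and `K_7`-free, then
`χ(G) ≤ 12`. -/
theorem chromatic_bound_K7 (V : Type*) [Fintype V] (G : SimpleGraph V)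
    (h3K1 : Gᶜ.CliqueFree 3) (hKfree : G.CliqueFree 7) :
    G.chromaticNumber ≤ 12 := by
  have hI : Gᶜ.IndepSetFreeOn (univ : Finset V) 7 := fun t _ ht =>
    hKfree t ((SimpleGraph.isNIndepSet_compl G).1 ht)
  obtain ⟨f, hf⟩ := SimpleGraph.exists_isMaxMatchingInvolution Gᶜ
  exact ((SimpleGraph.colorable_of_isMatchingInvolution_compl hf.1).mono
    (hf.card_image_le_twelve h3K1 hI)).chromaticNumber_le
end
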